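/- arXiv:2007.04421 — 2 statements merged into one kernel-verified Lean document; each statement's English description precedes it below -/
import Mathlib

section
/- Let f_l, f_r be C², uniformly strictly convex with modulus c > 0, minimizers θ_l, θ_r, and let T > 0, 0 < x < R. Define, for v with f_r'(v)·T − x ≥ 0 and f_r(v) ≥ f_l(θ_l), g₂(v, x) = −f_l'(f_{l,+}^{-1}(f_r(v)))·(T − x/f_r'(v)). Then ∂_v g₂(v,x) = −[ f_l''(w)·(f_r'(v))²·(f_r'(v)T − x) + x·(f_l'(w))²·f_r''(v) ] / [ f_l'(w)·(f_r'(v))² ] ≤ 0, where w = f_{l,+}^{-1}(f_r(v)); in particular g₂(·, x) is nonincreasing in v. -/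
theorem stmt_7 (fl fr : ℝ → ℝ) (c θl T x R : ℝ) (hc : 0 < c)
    (hfl : ContDiff ℝ 2 fl) (hfr : ContDiff ℝ 2 fr)
    (hconvl : ∀ u : ℝ, c ≤ deriv (deriv fl) u)
    (hconvr : ∀ u : ℝ, c ≤ deriv (deriv fr) u)
    (hθl : ∀ u : ℝ, fl θl ≤ fl u)
    (hT : 0 < T) (hx : 0 < x) (hxR : x < R)
    (π : ℝ → ℝ)
    (hπ : ∀ v : ℝ, fl θl ≤ fr v → θl ≤ π v ∧ fl (π v) = fr v) :
    let S : Set ℝ := {v | 0 < deriv fr v ∧ x ≤ deriv fr v * T ∧ fl θl ≤ fr v}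
    let g₂ : ℝ → ℝ := fun v => -(deriv fl (π v)) * (T - x / deriv fr v)
    (∀ v ∈ S, fl θl < fr v →
      HasDerivWithinAt g₂
        (-(deriv (deriv fl) (π v) * (deriv fr v) ^ 2 * (deriv fr v * T - x) +
            x * (deriv fl (π v)) ^ 2 * deriv (deriv fr) v) /
          (deriv fl (π v) * (deriv fr v) ^ 2)) S v ∧
      -(deriv (deriv fl) (π v) * (deriv fr v) ^ 2 * (deriv fr v * T - x) +
            x * (deriv fl (π v)) ^ 2 * deriv (deriv fr) v) /
          (deriv fl (π v) * (deriv fr v) ^ 2) ≤ 0) ∧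
    AntitoneOn g₂ S := by
  intro S g₂
  have hfl1 : Differentiable ℝ fl := hfl.differentiable two_ne_zero
  have hfr1 : Differentiable ℝ fr := hfr.differentiable two_ne_zero
  have hfl2 : Differentiable ℝ (deriv fl) := fun u =>
    differentiableAt_of_deriv_ne_zero (hc.trans_le (hconvl u)).ne'
  have hfr2 : Differentiable ℝ (deriv fr) := fun u =>
    differentiableAt_of_deriv_ne_zero (hc.trans_le (hconvr u)).ne'
  have hmonol : StrictMono (deriv fl) := strictMono_of_deriv_pos fun u => hc.trans_le (hconvl u)
  have hmonor : StrictMono (deriv fr) := strictMono_of_deriv_pos fun u => hc.trans_le (hconvr u)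
  have hθ0 : deriv fl θl = 0 := by
    have h : IsLocalMin fl θl := Filter.Eventually.of_forall hθl
    exact h.deriv_eq_zero
  have hflpos : ∀ u, θl < u → 0 < deriv fl u := by
    intro u h; rw [← hθ0]; exact hmonol h
  have hflnn : ∀ u, θl ≤ u → 0 ≤ deriv fl u := by
    intro u h; rw [← hθ0]; exact hmonol.monotone h
  have hsmfl : StrictMonoOn fl (Set.Ici θl) :=
    strictMonoOn_of_deriv_pos (convex_Ici θl) hfl1.continuous.continuousOn
      (fun u hu => hflpos u (by rwa [interior_Ici] at hu))
  have hfrle : ∀ a, 0 < deriv fr a → ∀ u, a ≤ u → fr a ≤ fr u := by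
    intro a ha1 u hau
    have hmon : MonotoneOn fr (Set.Icc a u) :=
      monotoneOn_of_deriv_nonneg (convex_Icc a u) hfr1.continuous.continuousOn
        (hfr1.differentiableOn)
        (fun t ht => (ha1.trans_le (hmonor.monotone
          (by rw [interior_Icc] at ht; exact ht.1.le))).le)
    exact hmon ⟨le_rfl, hau⟩ ⟨hau, le_rfl⟩ hau
  have upward : ∀ a ∈ S, ∀ u, a ≤ u → u ∈ S := by
    intro a ha u hau
    have ha' : 0 < deriv fr a ∧ x ≤ deriv fr a * T ∧ fl θl ≤ fr a := ha
    obtain ⟨ha1, ha2, ha3⟩ := ha'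
    have hd : deriv fr a ≤ deriv fr u := hmonor.monotone hau
    refine ⟨ha1.trans_le hd, ha2.trans (mul_le_mul_of_nonneg_right hd hT.le),
      ha3.trans (hfrle a ha1 u hau)⟩
  have key : ∀ v ∈ S, fl θl < fr v →
      HasDerivWithinAt g₂
        (-(deriv (deriv fl) (π v) * (deriv fr v) ^ 2 * (deriv fr v * T - x) +
            x * (deriv fl (π v)) ^ 2 * deriv (deriv fr) v) /
          (deriv fl (π v) * (deriv fr v) ^ 2)) S v ∧
      -(deriv (deriv fl) (π v) * (deriv fr v) ^ 2 * (deriv fr v * T - x) +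
            x * (deriv fl (π v)) ^ 2 * deriv (deriv fr) v) /
          (deriv fl (π v) * (deriv fr v) ^ 2) ≤ 0 := by
    intro v hv hlt
    have hv' : 0 < deriv fr v ∧ x ≤ deriv fr v * T ∧ fl θl ≤ fr v := hv
    obtain ⟨hv1, hv2, hv3⟩ := hv'
    obtain ⟨hπ1, hπ2⟩ := hπ v hv3
    have hwgt : θl < π v := by
      refine lt_of_le_of_ne hπ1 (fun h => ?_)
      rw [← h] at hπ2
      exact absurd hπ2 hlt.ne
    have hflw : 0 < deriv fl (π v) := hflpos _ hwgt
    have hsd : HasStrictDerivAt fl (deriv fl (π v)) (π v) := hfl.hasStrictDerivAt two_ne_zero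
    have hE := hsd.hasStrictFDerivAt_equiv hflw.ne'
    set φ : ℝ → ℝ := hsd.localInverse fl (deriv fl (π v)) (π v) hflw.ne' with hφdef
    have hright : ∀ᶠ y in nhds (fl (π v)), fl (φ y) = y := hE.eventually_right_inverse
    have hφa : φ (fl (π v)) = π v := hE.localInverse_apply_image
    have hφcont : ContinuousAt φ (fl (π v)) := hE.localInverse_continuousAt
    have hφd : HasDerivAt φ (deriv fl (π v))⁻¹ (fr v) := by
      have h := hsd.to_localInverse (hf' := hflw.ne')
      rw [hπ2] at h
      exact h.hasDerivAt
    have hfrd : HasDerivAt fr (deriv fr v) v := (hfr1 v).hasDerivAt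
    have hcomp : HasDerivAt (φ ∘ fr) ((deriv fl (π v))⁻¹ * deriv fr v) v := hφd.comp v hfrd
    have hfrt : Filter.Tendsto fr (nhds v) (nhds (fl (π v))) := by
      rw [hπ2]; exact hfr1.continuous.continuousAt
    have hev1 : ∀ᶠ u in nhds v, fl (φ (fr u)) = fr u := hfrt.eventually hright
    have hev2 : ∀ᶠ u in nhds v, θl < φ (fr u) := by
      have ht : Filter.Tendsto (fun u => φ (fr u)) (nhds v) (nhds (π v)) := by
        have h := hφcont.tendsto
        rw [hφa] at h
        exact h.comp hfrt
      exact ht.eventually (eventually_gt_nhds hwgt)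
    have heq : π =ᶠ[nhdsWithin v S] (φ ∘ fr) := by
      filter_upwards [nhdsWithin_le_nhds (hev1.and hev2), self_mem_nhdsWithin] with u hu huS
      have hu3 : fl θl ≤ fr u := (huS : 0 < deriv fr u ∧ x ≤ deriv fr u * T ∧ fl θl ≤ fr u).2.2
      obtain ⟨ha, hb⟩ := hπ u hu3
      exact hsmfl.injOn ha (le_of_lt hu.2) (hb.trans hu.1.symm)
    have hπd : HasDerivWithinAt π ((deriv fl (π v))⁻¹ * deriv fr v) S v := by
      refine (hcomp.hasDerivWithinAt).congr_of_eventuallyEq heq ?_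
      show π v = φ (fr v)
      rw [← hπ2]; exact hφa.symm
    have hdfl2v : HasDerivAt (deriv fl) (deriv (deriv fl) (π v)) (π v) := (hfl2 (π v)).hasDerivAt
    have h1 : HasDerivWithinAt (deriv fl ∘ π)
        (deriv (deriv fl) (π v) * ((deriv fl (π v))⁻¹ * deriv fr v)) S v :=
      hdfl2v.comp_hasDerivWithinAt v hπd
    have hdfr2v : HasDerivAt (deriv fr) (deriv (deriv fr) v) v := (hfr2 v).hasDerivAt
    have h2 : HasDerivAt (fun u => T - x / deriv fr u)
        (0 - (0 * deriv fr v - x * deriv (deriv fr) v) / (deriv fr v) ^ 2) v :=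
      (hasDerivAt_const v T).sub ((hasDerivAt_const v x).div hdfr2v hv1.ne')
    have hD : HasDerivWithinAt g₂
        (-(deriv (deriv fl) (π v) * ((deriv fl (π v))⁻¹ * deriv fr v)) * (T - x / deriv fr v) +
          -((deriv fl ∘ π) v) *
            (0 - (0 * deriv fr v - x * deriv (deriv fr) v) / (deriv fr v) ^ 2)) S v :=
      h1.neg.mul h2.hasDerivWithinAt
    have hEeq : -(deriv (deriv fl) (π v) * (deriv fr v) ^ 2 * (deriv fr v * T - x) +
            x * (deriv fl (π v)) ^ 2 * deriv (deriv fr) v) /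
          (deriv fl (π v) * (deriv fr v) ^ 2)
        = -(deriv (deriv fl) (π v) * ((deriv fl (π v))⁻¹ * deriv fr v)) * (T - x / deriv fr v) +
          -((deriv fl ∘ π) v) *
            (0 - (0 * deriv fr v - x * deriv (deriv fr) v) / (deriv fr v) ^ 2) := by
      simp only [Function.comp_apply]
      field_simp
      ring
    constructor
    · rw [hEeq]; exact hD
    · have t1 : 0 ≤ deriv fr v * T - x := sub_nonneg.mpr hv2
      have hcl : (0:ℝ) ≤ deriv (deriv fl) (π v) := (hc.trans_le (hconvl (π v))).le
      have hcr : (0:ℝ) ≤ deriv (deriv fr) v := (hc.trans_le (hconvr v)).le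
      have hnum : 0 ≤ deriv (deriv fl) (π v) * (deriv fr v) ^ 2 * (deriv fr v * T - x) +
          x * (deriv fl (π v)) ^ 2 * deriv (deriv fr) v :=
        add_nonneg (mul_nonneg (mul_nonneg hcl (sq_nonneg _)) t1)
          (mul_nonneg (mul_nonneg hx.le (sq_nonneg _)) hcr)
      have hden : 0 < deriv fl (π v) * (deriv fr v) ^ 2 := by positivity
      rw [neg_div]
      exact neg_nonpos.mpr (div_nonneg hnum hden.le)
  refine ⟨key, ?_⟩
  intro a ha b hb hab
  have ha' : 0 < deriv fr a ∧ x ≤ deriv fr a * T ∧ fl θl ≤ fr a := ha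
  obtain ⟨ha1, ha2, ha3⟩ := ha'
  by_cases hfa : fl θl < fr a
  · have hIoiS : Set.Ioi a ⊆ S := fun u hu => upward a ha u (le_of_lt hu)
    have hIccS : Set.Icc a b ⊆ S := fun u hu => upward a ha u hu.1
    have hfrm : ∀ u ∈ Set.Icc a b, fl θl < fr u := fun u hu =>
      hfa.trans_le (hfrle a ha1 u hu.1)
    have hanti : AntitoneOn g₂ (Set.Icc a b) := by
      apply antitoneOn_of_deriv_nonpos (convex_Icc a b)
      · intro u hu
        exact ((key u (hIccS hu) (hfrm u hu)).1.continuousWithinAt).mono hIccS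
      · intro u hu
        rw [interior_Icc] at hu
        have hS : S ∈ nhds u := Filter.mem_of_superset (isOpen_Ioi.mem_nhds hu.1) hIoiS
        exact (((key u (hIccS ⟨hu.1.le, hu.2.le⟩) (hfrm u ⟨hu.1.le, hu.2.le⟩)).1.hasDerivAt
          hS).differentiableAt).differentiableWithinAt
      · intro u hu
        rw [interior_Icc] at hu
        have hS : S ∈ nhds u := Filter.mem_of_superset (isOpen_Ioi.mem_nhds hu.1) hIoiS
        have hk := key u (hIccS ⟨hu.1.le, hu.2.le⟩) (hfrm u ⟨hu.1.le, hu.2.le⟩)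
        rw [(hk.1.hasDerivAt hS).deriv]
        exact hk.2
    exact hanti ⟨le_rfl, hab⟩ ⟨hab, le_rfl⟩ hab
  · have hfa' : fr a = fl θl := le_antisymm (not_lt.mp hfa) ha3
    obtain ⟨hπa1, hπa2⟩ := hπ a ha3
    have hπa : π a = θl := hsmfl.injOn hπa1 Set.self_mem_Ici (hπa2.trans hfa')
    have hga : g₂ a = 0 := by
      show -(deriv fl (π a)) * (T - x / deriv fr a) = 0
      rw [hπa, hθ0]; ring
    have hb' : 0 < deriv fr b ∧ x ≤ deriv fr b * T ∧ fl θl ≤ fr b := hb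
    obtain ⟨hb1, hb2, hb3⟩ := hb'
    obtain ⟨hπb1, hπb2⟩ := hπ b hb3
    have h1 : 0 ≤ deriv fl (π b) := hflnn _ hπb1
    have h2 : 0 ≤ T - x / deriv fr b :=
      sub_nonneg.mpr ((div_le_iff₀ hb1).mpr (by linarith))
    have hgb : g₂ b ≤ 0 := by
      show -(deriv fl (π b)) * (T - x / deriv fr b) ≤ 0
      rw [neg_mul]
      exact neg_nonpos.mpr (mul_nonneg h1 h2)
    rw [hga]; exact hgb
end

section
/- Let G : ℝ → 𝒫(ℝ) be a measurable multifunction with convex closed values, uniformly bounded (G(x) ⊆ [−M, M] for all x), and let 𝒰 = { u ∈ L^∞(ℝ) : u(x) ∈ G(x) for a.e. x }. If (u_n) ⊂ 𝒰 converges weakly-* in L^∞(ℝ) to u, then u ∈ 𝒰. -/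
open Filter Topology MeasureTheory

/-- Measurable-hull localization: if `E` is a measurable hull of `S` (of finite measure),
then `μ (E ∩ F) = μ (S ∩ F)` for every measurable `F`. -/
lemma hull_inter_eq {S E F : Set ℝ} (hE : MeasurableSet E) (hF : MeasurableSet F)
    (hSE : S ⊆ E) (hμ : volume E = volume S) (hfin : volume E ≠ ⊤) :
    volume (E ∩ F) = volume (S ∩ F) := by
  have h1 : volume (S ∩ F) + volume (S \ F) = volume S := measure_inter_add_diff S hF
  have h2 : volume (E ∩ F) + volume (E \ F) = volume E := measure_inter_add_diff E hF
  have ha : volume (S ∩ F) ≤ volume (E ∩ F) :=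
    measure_mono (Set.inter_subset_inter_left _ hSE)
  have hb : volume (S \ F) ≤ volume (E \ F) :=
    measure_mono (Set.diff_subset_diff_left hSE)
  have hd : volume (E \ F) ≠ ⊤ :=
    ne_top_of_le_ne_top hfin (measure_mono Set.diff_subset)
  refine le_antisymm ?_ ha
  have : volume (E ∩ F) + volume (E \ F) ≤ volume (S ∩ F) + volume (E \ F) := by
    rw [h2, hμ, ← h1]
    exact add_le_add le_rfl hb
  exact (ENNReal.add_le_add_iff_right hd).1 this

/-- Key lemma: if on `S` the multifunction values lie strictly below `q` while the weak-* limit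
lies strictly above `q`, then `S` is null. -/
lemma aux_null (G : ℝ → Set ℝ) (M : ℝ)
    (u : ℕ → ℝ → ℝ) (ulim : ℝ → ℝ)
    (humeas : ∀ n, Measurable (u n)) (hulimmeas : Measurable ulim)
    (hubd : ∀ n x, |u n x| ≤ M) (hulimbd : ∀ x, |ulim x| ≤ M)
    (husel : ∀ n, ∀ᵐ x : ℝ, u n x ∈ G x)
    (hconv : ∀ φ : ℝ → ℝ, Integrable φ →
      Tendsto (fun n => ∫ x : ℝ, u n x * φ x) atTop (𝓝 (∫ x : ℝ, ulim x * φ x)))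
    (q : ℝ) (S : Set ℝ) (hfin : volume S ≠ ⊤)
    (hS : ∀ x ∈ S, G x ⊆ Set.Iio q ∧ q < ulim x) :
    volume S = 0 := by
  by_contra hne
  set E : Set ℝ := toMeasurable volume S with hEdef
  have hE : MeasurableSet E := measurableSet_toMeasurable _ _
  have hSE : S ⊆ E := subset_toMeasurable _ _
  have hμE : volume E = volume S := measure_toMeasurable S
  have hEfin : volume E ≠ ⊤ := by rw [hμE]; exact hfin
  have hEpos : volume E ≠ 0 := by rw [hμE]; exact hne
  have hElt : volume E < ⊤ := lt_top_iff_ne_top.2 hEfin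
  -- the test function
  set φ : ℝ → ℝ := E.indicator (fun _ => (1 : ℝ)) with hφdef
  have hφ : Integrable φ :=
    (integrable_indicator_iff hE).2 (integrableOn_const hEfin)
  have key : ∀ f : ℝ → ℝ, (∫ x : ℝ, f x * φ x) = ∫ x in E, f x := by
    intro f
    rw [← integral_indicator hE]
    congr 1
    funext x
    by_cases hx : x ∈ E <;> simp [hφdef, hx]
  -- a.e. on E, u n ≤ q
  have hub : ∀ n, ∀ᵐ x ∂(volume.restrict E), u n x ≤ q := by
    intro n
    have hFm : MeasurableSet {x : ℝ | q < u n x} := measurableSet_lt measurable_const (humeas n)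
    have hnull : volume (E ∩ {x : ℝ | q < u n x}) = 0 := by
      rw [hull_inter_eq hE hFm hSE hμE hEfin]
      refine measure_mono_null ?_ ((ae_iff.1 (husel n)))
      rintro x ⟨hxS, hxq⟩
      intro hmem
      have h' := (hS x hxS).1 hmem
      rw [Set.mem_Iio] at h'
      exact absurd h' (not_lt.2 (le_of_lt hxq))
    rw [ae_iff]
    have : {x : ℝ | ¬ u n x ≤ q} = {x : ℝ | q < u n x} := by
      ext x; simp [not_le]
    rw [this, Measure.restrict_apply hFm, Set.inter_comm]
    exact hnull
  -- a.e. on E, q < ulim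
  have hulb : ∀ᵐ x ∂(volume.restrict E), q < ulim x := by
    have hFm : MeasurableSet {x : ℝ | ulim x ≤ q} := measurableSet_le hulimmeas measurable_const
    have hnull : volume (E ∩ {x : ℝ | ulim x ≤ q}) = 0 := by
      rw [hull_inter_eq hE hFm hSE hμE hEfin]
      have : S ∩ {x : ℝ | ulim x ≤ q} = ∅ := by
        ext x
        simp only [Set.mem_inter_iff, Set.mem_setOf_eq, Set.mem_empty_iff_false, iff_false,
          not_and, not_le]
        intro hxS
        exact (hS x hxS).2
      rw [this, measure_empty]
    rw [ae_iff]
    have : {x : ℝ | ¬ q < ulim x} = {x : ℝ | ulim x ≤ q} := by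
      ext x; simp [not_lt]
    rw [this, Measure.restrict_apply hFm, Set.inter_comm]
    exact hnull
  -- integrability
  have hIntc : IntegrableOn (fun _ => q) E := integrableOn_const hEfin
  have hIntM : IntegrableOn (fun _ => M) E := integrableOn_const hEfin
  have hInt : ∀ n, IntegrableOn (u n) E := by
    intro n
    exact Integrable.mono' hIntM (humeas n).aestronglyMeasurable
      (Filter.Eventually.of_forall fun x => by rw [Real.norm_eq_abs]; exact hubd n x)
  have hIntl : IntegrableOn ulim E :=
    Integrable.mono' hIntM hulimmeas.aestronglyMeasurable
      (Filter.Eventually.of_forall fun x => by rw [Real.norm_eq_abs]; exact hulimbd x)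
  -- the limit inequality
  have hle : ∀ n, (∫ x in E, u n x) ≤ q * (volume E).toReal := by
    intro n
    have h1 : (∫ x in E, u n x) ≤ ∫ x in E, (fun _ => q) x :=
      integral_mono_ae (hInt n) hIntc (hub n)
    rwa [setIntegral_const, smul_eq_mul, mul_comm] at h1
  have hlim : Tendsto (fun n => ∫ x in E, u n x) atTop (𝓝 (∫ x in E, ulim x)) := by
    have := hconv φ hφ
    simpa only [key] using this
  have h1 : (∫ x in E, ulim x) ≤ q * (volume E).toReal :=
    le_of_tendsto hlim (Filter.Eventually.of_forall hle)
  -- strict positivity contradiction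
  have h3 : (0 : ℝ → ℝ) ≤ᵐ[volume.restrict E] fun x => ulim x - q :=
    hulb.mono fun x hx => by simp [sub_nonneg, le_of_lt hx]
  have h2 : (∫ x in E, (ulim x - q)) ≤ 0 := by
    rw [integral_sub hIntl hIntc, setIntegral_const, smul_eq_mul, mul_comm]
    exact sub_nonpos.2 h1
  have h4 : (∫ x in E, (ulim x - q)) = 0 :=
    le_antisymm h2 (integral_nonneg_of_ae h3)
  have h5 : (fun x => ulim x - q) =ᵐ[volume.restrict E] 0 :=
    (integral_eq_zero_iff_of_nonneg_ae h3 (hIntl.sub hIntc)).1 h4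
  have h6 : ∀ᵐ x ∂(volume.restrict E), False := by
    filter_upwards [h5, hulb] with x hx hx2
    have : ulim x - q = 0 := hx
    linarith
  rw [ae_iff] at h6
  simp only [not_false_iff, Set.setOf_true] at h6
  rw [Measure.restrict_apply_univ] at h6
  exact hEpos h6

theorem stmt_17 (G : ℝ → Set ℝ) (M : ℝ)
    (hGne : ∀ x, (G x).Nonempty)
    (hGbd : ∀ x, G x ⊆ Set.Icc (-M) M)
    (hGconv : ∀ x, Convex ℝ (G x))
    (hGcl : ∀ x, IsClosed (G x))
    (hGmeas : MeasurableSet {p : ℝ × ℝ | p.2 ∈ G p.1})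
    (u : ℕ → ℝ → ℝ) (ulim : ℝ → ℝ)
    (humeas : ∀ n, Measurable (u n)) (hulimmeas : Measurable ulim)
    (hubd : ∀ n x, |u n x| ≤ M) (hulimbd : ∀ x, |ulim x| ≤ M)
    (husel : ∀ n, ∀ᵐ x : ℝ, u n x ∈ G x)
    (hconv : ∀ φ : ℝ → ℝ, Integrable φ →
      Tendsto (fun n => ∫ x : ℝ, u n x * φ x) atTop (𝓝 (∫ x : ℝ, ulim x * φ x))) :
    ∀ᵐ x : ℝ, ulim x ∈ G x := by
  rw [ae_iff]
  set S1 : ℚ → ℕ → Set ℝ := fun q R =>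
    {x : ℝ | (G x ⊆ Set.Iio (q : ℝ) ∧ (q : ℝ) < ulim x) ∧ x ∈ Set.Icc (-(R : ℝ)) R} with hS1def
  set S2 : ℚ → ℕ → Set ℝ := fun q R =>
    {x : ℝ | (G x ⊆ Set.Ioi (q : ℝ) ∧ ulim x < (q : ℝ)) ∧ x ∈ Set.Icc (-(R : ℝ)) R} with hS2def
  have cover : {x : ℝ | ¬ ulim x ∈ G x} ⊆ ⋃ (q : ℚ) (R : ℕ), (S1 q R ∪ S2 q R) := by
    intro x hx
    simp only [Set.mem_setOf_eq] at hx
    have hbb : BddBelow (G x) := ⟨-M, fun y hy => (hGbd x hy).1⟩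
    have hba : BddAbove (G x) := ⟨M, fun y hy => (hGbd x hy).2⟩
    have ha : sInf (G x) ∈ G x := (hGcl x).csInf_mem (hGne x) hbb
    have hb : sSup (G x) ∈ G x := (hGcl x).csSup_mem (hGne x) hba
    have hOC : (G x).OrdConnected := convex_iff_ordConnected.1 (hGconv x)
    have hnot : ulim x ∉ Set.Icc (sInf (G x)) (sSup (G x)) := fun h =>
      hx (hOC.out ha hb h)
    have hxR : x ∈ Set.Icc (-(⌈|x|⌉₊ : ℝ)) (⌈|x|⌉₊ : ℝ) := by
      have := Nat.le_ceil |x|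
      constructor
      · linarith [abs_le.1 (le_trans (le_refl |x|) this) |>.1, neg_abs_le x,
          (Nat.le_ceil |x|)]
      · exact le_trans (le_abs_self x) (Nat.le_ceil |x|)
    rw [Set.mem_Icc, not_and_or] at hnot
    rcases hnot with h | h
    · -- ulim x < sInf (G x)
      have hlt : ulim x < sInf (G x) := lt_of_not_ge h
      obtain ⟨q, hq1, hq2⟩ := exists_rat_btwn hlt
      refine Set.mem_iUnion.2 ⟨q, Set.mem_iUnion.2 ⟨⌈|x|⌉₊, Or.inr ⟨⟨?_, hq1⟩, hxR⟩⟩⟩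
      intro y hy
      exact lt_of_lt_of_le hq2 (csInf_le hbb hy)
    · -- sSup (G x) < ulim x
      have hlt : sSup (G x) < ulim x := lt_of_not_ge h
      obtain ⟨q, hq1, hq2⟩ := exists_rat_btwn hlt
      refine Set.mem_iUnion.2 ⟨q, Set.mem_iUnion.2 ⟨⌈|x|⌉₊, Or.inl ⟨⟨?_, hq2⟩, hxR⟩⟩⟩
      intro y hy
      exact lt_of_le_of_lt (le_csSup hba hy) hq1
  refine measure_mono_null cover ?_
  rw [measure_iUnion_null_iff]
  intro q
  rw [measure_iUnion_null_iff]
  intro R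
  have hIccfin : volume (Set.Icc (-(R : ℝ)) (R : ℝ)) ≠ ⊤ := by
    rw [Real.volume_Icc]; exact ENNReal.ofReal_ne_top
  refine measure_union_null ?_ ?_
  · -- S1 : values below q, limit above q
    refine aux_null G M u ulim humeas hulimmeas hubd hulimbd husel hconv (q : ℝ) _
      (ne_top_of_le_ne_top hIccfin (measure_mono fun x hx => hx.2)) ?_
    rintro x ⟨⟨h1, h2⟩, _⟩
    exact ⟨h1, h2⟩
  · -- S2 : values above q, limit below q ; apply aux_null to negated data
    refine aux_null (fun x => {y : ℝ | -y ∈ G x}) M (fun n x => -(u n x)) (fun x => -(ulim x))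
      (fun n => (humeas n).neg) hulimmeas.neg
      (fun n x => by rw [abs_neg]; exact hubd n x)
      (fun x => by rw [abs_neg]; exact hulimbd x)
      (fun n => (husel n).mono fun x hx => by simpa using hx)
      ?_ (-(q : ℝ)) _
      (ne_top_of_le_ne_top hIccfin (measure_mono fun x hx => hx.2)) ?_
    · intro ψ hψ
      have := hconv ψ hψ
      simp only [neg_mul, integral_neg]
      exact this.neg
    · rintro x ⟨⟨h1, h2⟩, _⟩
      refine ⟨fun y hy => ?_, show -(q : ℝ) < -ulim x from neg_lt_neg h2⟩
      have : -y > (q : ℝ) := h1 hy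
      simp only [Set.mem_Iio]
      linarith
end
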